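/- Let n ≥ 2 and let W be the Weyl group of type B_n. Suppose w_1, …, w_k ∈ W are such that the positive roots Δ⁺ are the disjoint union Δ⁺ = Φ_{w_1} ⊔ Φ_{w_2} ⊔ ⋯ ⊔ Φ_{w_k} of their inversion sets. If u ∈ W satisfies w_i ≤ w_i u in the Bruhat order for every i = 1, …, k, then u = e (the identity). -/

import Mathlib

/-!
Suppose `u ≠ 1` and let `a` be the first index with `u ε_a ≠ ε_a`. Then `u ε_a = ±ε_d` with
`d ≥ a`, so the coweight `ω_a = ε_1 + ⋯ + ε_a` satisfies `ω_a - u ω_a = c β` with `c > 0` and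
`β ∈ Δ⁺`. Along a Bruhat step `x < x s_α` one has `x α ∈ Δ⁺`, so `⟪ω, x ω'⟫` can only decrease
for dominant `ω, ω'`; in particular `⟪ω_j, w_i u ω_a⟫ ≤ ⟪ω_j, w_i ω_a⟫`. Choosing `i` with
`β ∈ Φ_{w_i}` and `j` with `⟪ω_j, w_i β⟫ < 0` contradicts
`⟪ω_j, w_i u ω_a⟫ = ⟪ω_j, w_i ω_a⟫ - c ⟪ω_j, w_i β⟫`.
-/

open RealInnerProductSpace

noncomputable section

variable {V : Type*} [NormedAddCommGroup V] [InnerProductSpace ℝ V] [FiniteDimensional ℝ V]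

/-- Orthogonal reflection of `V` in the hyperplane orthogonal to `α`. -/
def reflRoot (α : V) : V ≃ₗᵢ[ℝ] V := Submodule.reflection (ℝ ∙ α)ᗮ

/-- The inversion set `Φ_w = w⁻¹Δ⁻ ∩ Δ⁺ = {α ∈ Δ⁺ | w α ∈ Δ⁻}`, where `Δ⁻ = -Δ⁺`
(so `w α ∈ Δ⁻ ↔ -(w α) ∈ Δ⁺`). -/
def invSet (pos : Set V) (w : V ≃ₗᵢ[ℝ] V) : Set V := {α | α ∈ pos ∧ -(w α) ∈ pos}

/-- The length of `w`, i.e. the number of inversions of `w`. -/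
def invLen (pos : Set V) (w : V ≃ₗᵢ[ℝ] V) : ℕ := (invSet pos w).ncard

/-- The Bruhat order on the Weyl group: the reflexive-transitive closure of the relation
`x ⋖ x * s_α` (right multiplication by the reflection in a root `α`) whenever the length
(= number of inversions) increases. -/
def bruhatLE (roots pos : Set V) : (V ≃ₗᵢ[ℝ] V) → (V ≃ₗᵢ[ℝ] V) → Prop :=
  Relation.ReflTransGen
    (fun x y => (∃ α ∈ roots, y = x * reflRoot α) ∧ invLen pos x < invLen pos y)

/-- The standard basis vector `ε_p` of `ℝ^m`. -/
def eps (m : ℕ) (p : Fin m) : EuclideanSpace ℝ (Fin m) := EuclideanSpace.single p (1 : ℝ)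

/-- `ρ`, one half the sum of the positive roots. -/
def rho (pos : Set V) : V := (2⁻¹ : ℝ) • ∑ᶠ α ∈ pos, α

/-- The group of signed permutations: isometries of `ℝ^n` sending each standard basis
vector to plus or minus a standard basis vector. -/
def signedPerm (n : ℕ) : Set (EuclideanSpace ℝ (Fin n) ≃ₗᵢ[ℝ] EuclideanSpace ℝ (Fin n)) :=
  {g | ∀ p, ∃ q, g (eps n p) = eps n q ∨ g (eps n p) = -eps n q}

/-- The group of even-signed permutations: signed permutations with an even number of
sign changes. -/
def evenSignedPerm (n : ℕ) :
    Set (EuclideanSpace ℝ (Fin n) ≃ₗᵢ[ℝ] EuclideanSpace ℝ (Fin n)) :=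
  {g | g ∈ signedPerm n ∧ Even (Set.ncard {p : Fin n | ∃ q, g (eps n p) = -eps n q})}

/-- The positive roots of type `B_n`: `ε_p` and `ε_p ± ε_q` for `p < q`. -/
def posB (n : ℕ) : Set (EuclideanSpace ℝ (Fin n)) :=
  {v | (∃ p, v = eps n p) ∨
    ∃ p q : Fin n, p < q ∧ (v = eps n p + eps n q ∨ v = eps n p - eps n q)}

/-- The roots of type `B_n`. -/
def rootsB (n : ℕ) : Set (EuclideanSpace ℝ (Fin n)) := {v | v ∈ posB n ∨ -v ∈ posB n}

/-- The positive roots of type `C_n`: `2ε_p` and `ε_p ± ε_q` for `p < q`. -/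
def posC (n : ℕ) : Set (EuclideanSpace ℝ (Fin n)) :=
  {v | (∃ p, v = (2 : ℝ) • eps n p) ∨
    ∃ p q : Fin n, p < q ∧ (v = eps n p + eps n q ∨ v = eps n p - eps n q)}

/-- The roots of type `C_n`. -/
def rootsC (n : ℕ) : Set (EuclideanSpace ℝ (Fin n)) := {v | v ∈ posC n ∨ -v ∈ posC n}

/-- The positive roots of type `D_n`: `ε_p ± ε_q` for `p < q`. -/
def posD (n : ℕ) : Set (EuclideanSpace ℝ (Fin n)) :=
  {v | ∃ p q : Fin n, p < q ∧ (v = eps n p + eps n q ∨ v = eps n p - eps n q)}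

/-- The roots of type `D_n`. -/
def rootsD (n : ℕ) : Set (EuclideanSpace ℝ (Fin n)) := {v | v ∈ posD n ∨ -v ∈ posD n}

section RootSystem

variable {E : Type*} [NormedAddCommGroup E] [InnerProductSpace ℝ E] {pos : Set E}

def PreservesRoots (pos : Set E) (x : E ≃ₗᵢ[ℝ] E) : Prop :=
  ∀ v ∈ pos, x v ∈ pos ∨ -(x v) ∈ pos

theorem PreservesRoots.mul {x y : E ≃ₗᵢ[ℝ] E} (hx : PreservesRoots pos x)
    (hy : PreservesRoots pos y) : PreservesRoots pos (x * y) := by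
  intro v hv
  rcases hy v hv with h | h
  · exact hx _ h
  · simpa [or_comm] using hx _ h

theorem inner_neg_of_neg_mem {δ : E} (hδ : ∀ γ ∈ pos, 0 < ⟪γ, δ⟫) {v : E} (hv : -v ∈ pos) :
    ⟪v, δ⟫ < 0 := by
  simpa [inner_neg_left] using hδ _ hv

theorem neg_mem_of_inner_neg {δ : E} (hδ : ∀ γ ∈ pos, 0 < ⟪γ, δ⟫) {v : E}
    (hv : v ∈ pos ∨ -v ∈ pos) (h : ⟪v, δ⟫ < 0) : -v ∈ pos :=
  hv.resolve_left fun hpos => (hδ v hpos).not_gt h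

theorem reflRoot_apply (α v : E) : reflRoot α v = v - (2 * ⟪α, v⟫ / ⟪α, α⟫) • α := by
  rw [reflRoot, Submodule.reflection_orthogonal_apply, Submodule.reflection_singleton_apply,
    real_inner_self_eq_norm_sq]
  simp only [RCLike.ofReal_real_eq_id, id]
  module

theorem reflRoot_neg (α : E) : reflRoot (-α) = reflRoot α := by
  unfold reflRoot
  congr 2
  rw [← Set.neg_singleton, Submodule.span_neg]

theorem reflRoot_reflRoot (α v : E) : reflRoot α (reflRoot α v) = v :=
  Submodule.reflection_reflection _ v

theorem exists_mem_reflRoot_eq {roots : Set E} (hroots : ∀ α ∈ roots, α ∈ pos ∨ -α ∈ pos)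
    {α : E} (hα : α ∈ roots) : ∃ α' ∈ pos, reflRoot α = reflRoot α' := by
  rcases hroots α hα with h | h
  · exact ⟨α, h, rfl⟩
  · exact ⟨-α, h, (reflRoot_neg α).symm⟩

theorem PreservesRoots.of_bruhatLE {roots : Set E}
    (hrefl : ∀ α ∈ pos, PreservesRoots pos (reflRoot α))
    (hroots : ∀ α ∈ roots, α ∈ pos ∨ -α ∈ pos) {x y : E ≃ₗᵢ[ℝ] E}
    (hx : PreservesRoots pos x) (hxy : bruhatLE roots pos x y) : PreservesRoots pos y := by
  induction hxy with
  | refl => exact hx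
  | tail _ hbc ih =>
    obtain ⟨⟨α₀, hα₀, rfl⟩, -⟩ := hbc
    obtain ⟨α, hα, hsα⟩ := exists_mem_reflRoot_eq hroots hα₀
    exact hsα ▸ ih.mul (hrefl α hα)

/-- If `x α < 0`, then `β ↦ s_α β` (if this is positive, else `β`) injects `Φ_{x s_α}` into
`Φ_x`. -/
theorem invLen_mul_reflRoot_le {δ : E} (hfin : pos.Finite) (hδ : ∀ γ ∈ pos, 0 < ⟪γ, δ⟫)
    (hrefl : ∀ α ∈ pos, PreservesRoots pos (reflRoot α)) {x : E ≃ₗᵢ[ℝ] E}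
    (hx : PreservesRoots pos x) {α : E} (hα : α ∈ pos) (hxα : -(x α) ∈ pos) :
    invLen pos (x * reflRoot α) ≤ invLen pos x := by
  classical
  refine Set.ncard_le_ncard_of_injOn
    (fun β => if reflRoot α β ∈ pos then reflRoot α β else β) ?_ ?_
    (hfin.subset fun β hβ => hβ.1)
  · rintro β ⟨hβ, hxsβ⟩
    rw [LinearIsometryEquiv.coe_mul, Function.comp_apply] at hxsβ
    by_cases hsβ : reflRoot α β ∈ pos
    · rw [if_pos hsβ]
      exact ⟨hsβ, hxsβ⟩
    rw [if_neg hsβ]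
    refine ⟨hβ, neg_mem_of_inner_neg hδ (hx β hβ) ?_⟩
    obtain ⟨c, hβ_eq⟩ : ∃ c : ℝ, β = reflRoot α β + c • α := ⟨_, by rw [reflRoot_apply]; abel⟩
    have hsβ_neg := inner_neg_of_neg_mem hδ ((hrefl α hα β hβ).resolve_left hsβ)
    have hc : 0 < c := by
      have hβδ := hδ β hβ
      rw [hβ_eq, inner_add_left, real_inner_smul_left] at hβδ
      nlinarith [hδ α hα]
    rw [hβ_eq, map_add, map_smul, inner_add_left, real_inner_smul_left]
    nlinarith [inner_neg_of_neg_mem hδ hxsβ, inner_neg_of_neg_mem hδ hxα]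
  · intro β₁ h₁ β₂ h₂ he
    by_cases c₁ : reflRoot α β₁ ∈ pos <;> by_cases c₂ : reflRoot α β₂ ∈ pos <;>
      simp only [c₁, c₂, if_true, if_false] at he
    · exact (reflRoot α).injective he
    · exact (c₂ (by rw [← he, reflRoot_reflRoot]; exact h₁.1)).elim
    · exact (c₁ (by rw [he, reflRoot_reflRoot]; exact h₂.1)).elim
    · exact he

theorem mem_of_invLen_lt_invLen_mul_reflRoot {δ : E} (hfin : pos.Finite)
    (hδ : ∀ γ ∈ pos, 0 < ⟪γ, δ⟫) (hrefl : ∀ α ∈ pos, PreservesRoots pos (reflRoot α))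
    {x : E ≃ₗᵢ[ℝ] E} (hx : PreservesRoots pos x) {α : E} (hα : α ∈ pos)
    (hlt : invLen pos x < invLen pos (x * reflRoot α)) : x α ∈ pos :=
  (hx α hα).resolve_right fun hxα => (invLen_mul_reflRoot_le hfin hδ hrefl hx hα hxα).not_gt hlt

theorem inner_apply_le_of_bruhatLE {δ : E} {roots : Set E} (hfin : pos.Finite)
    (hδ : ∀ γ ∈ pos, 0 < ⟪γ, δ⟫) (hrefl : ∀ α ∈ pos, PreservesRoots pos (reflRoot α))
    (hroots : ∀ α ∈ roots, α ∈ pos ∨ -α ∈ pos) {ω₁ ω₂ : E} (hω₁ : ∀ γ ∈ pos, 0 ≤ ⟪γ, ω₁⟫)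
    (hω₂ : ∀ γ ∈ pos, 0 ≤ ⟪γ, ω₂⟫) {x y : E ≃ₗᵢ[ℝ] E} (hx : PreservesRoots pos x)
    (hxy : bruhatLE roots pos x y) : ⟪ω₁, y ω₂⟫ ≤ ⟪ω₁, x ω₂⟫ := by
  induction hxy with
  | refl => rfl
  | @tail b _ hxb hbc ih =>
    obtain ⟨⟨α₀, hα₀, rfl⟩, hlt⟩ := hbc
    obtain ⟨α, hα, hsα⟩ := exists_mem_reflRoot_eq hroots hα₀
    rw [hsα] at hlt ⊢
    have hb := hx.of_bruhatLE hrefl hroots hxb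
    have hbα : 0 ≤ ⟪ω₁, b α⟫ := by
      rw [real_inner_comm]
      exact hω₁ _ (mem_of_invLen_lt_invLen_mul_reflRoot hfin hδ hrefl hb hα hlt)
    have hc : 0 ≤ 2 * ⟪α, ω₂⟫ / ⟪α, α⟫ :=
      div_nonneg (by linarith [hω₂ α hα]) real_inner_self_nonneg
    calc ⟪ω₁, (b * reflRoot α) ω₂⟫ = ⟪ω₁, b ω₂⟫ - 2 * ⟪α, ω₂⟫ / ⟪α, α⟫ * ⟪ω₁, b α⟫ := by
          rw [LinearIsometryEquiv.coe_mul, Function.comp_apply, reflRoot_apply, map_sub,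
            map_smul, inner_sub_right, real_inner_smul_right]
      _ ≤ ⟪ω₁, b ω₂⟫ := sub_le_self _ (mul_nonneg hc hbα)
      _ ≤ ⟪ω₁, x ω₂⟫ := ih

end RootSystem

section TypeB

variable {n : ℕ}

theorem inner_eps_left (p : Fin n) (v : EuclideanSpace ℝ (Fin n)) : ⟪eps n p, v⟫ = v p := by
  simp [eps, EuclideanSpace.inner_single_left]

theorem eps_apply (p q : Fin n) : eps n p q = if q = p then 1 else 0 := by
  simp [eps, PiLp.single_apply]

theorem inner_eps_eps (p q : Fin n) : ⟪eps n p, eps n q⟫ = if p = q then 1 else 0 := by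
  rw [inner_eps_left, eps_apply]

def regularB (n : ℕ) : EuclideanSpace ℝ (Fin n) := WithLp.toLp 2 fun p => (n : ℝ) - p

theorem inner_regularB_pos {γ : EuclideanSpace ℝ (Fin n)} (hγ : γ ∈ posB n) :
    0 < ⟪γ, regularB n⟫ := by
  have h (p : Fin n) : ⟪eps n p, regularB n⟫ = n - p := by simp [inner_eps_left, regularB]
  have hp (p : Fin n) : (p : ℝ) < n := by exact_mod_cast p.2
  obtain ⟨p, rfl⟩ | ⟨p, q, hpq, rfl | rfl⟩ := hγ
  · linarith [h p, hp p]
  · rw [inner_add_left, h, h]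
    linarith [hp p, hp q]
  · have : (p : ℝ) < q := by exact_mod_cast hpq
    rw [inner_sub_left, h, h]
    linarith

def coweightB (n : ℕ) (j : Fin n) : EuclideanSpace ℝ (Fin n) := ∑ m ∈ Finset.Iic j, eps n m

theorem inner_eps_coweightB (p j : Fin n) :
    ⟪eps n p, coweightB n j⟫ = if p ≤ j then 1 else 0 := by
  rw [inner_eps_left]
  simp [coweightB, eps_apply]

theorem inner_coweightB_nonneg {γ : EuclideanSpace ℝ (Fin n)} (hγ : γ ∈ posB n) (j : Fin n) :
    0 ≤ ⟪γ, coweightB n j⟫ := by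
  obtain ⟨p, rfl⟩ | ⟨p, q, hpq, rfl | rfl⟩ := hγ
  · rw [inner_eps_coweightB]; split_ifs <;> norm_num
  · rw [inner_add_left, inner_eps_coweightB, inner_eps_coweightB]; split_ifs <;> norm_num
  · rw [inner_sub_left, inner_eps_coweightB, inner_eps_coweightB]
    by_cases hq : q ≤ j
    · simp [hq, hpq.le.trans hq]
    · simp only [hq, if_false, sub_zero]
      split_ifs <;> norm_num

theorem exists_inner_coweightB_pos {γ : EuclideanSpace ℝ (Fin n)} (hγ : γ ∈ posB n) :
    ∃ j, 0 < ⟪γ, coweightB n j⟫ := by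
  obtain ⟨p, rfl⟩ | ⟨p, q, hpq, rfl | rfl⟩ := hγ
  · exact ⟨p, by simp [inner_eps_coweightB]⟩
  all_goals exact ⟨p, by simp [inner_add_left, inner_sub_left, inner_eps_coweightB, hpq.not_ge]⟩

theorem posB_finite (n : ℕ) : (posB n).Finite := by
  refine ((Set.finite_range (eps n)).union ((Set.finite_range fun pq : Fin n × Fin n =>
    eps n pq.1 + eps n pq.2).union (Set.finite_range fun pq : Fin n × Fin n =>
    eps n pq.1 - eps n pq.2))).subset ?_
  rintro v (⟨p, rfl⟩ | ⟨p, q, -, rfl | rfl⟩)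
  · exact Or.inl ⟨p, rfl⟩
  · exact Or.inr (Or.inl ⟨(p, q), rfl⟩)
  · exact Or.inr (Or.inr ⟨(p, q), rfl⟩)

theorem eq_of_apply_eps_eq {x : EuclideanSpace ℝ (Fin n) ≃ₗᵢ[ℝ] EuclideanSpace ℝ (Fin n)}
    {p q r : Fin n} (hp : x (eps n p) = eps n r ∨ x (eps n p) = -eps n r)
    (hq : x (eps n q) = eps n r ∨ x (eps n q) = -eps n r) : p = q := by
  have h := x.inner_map_map (eps n p) (eps n q)
  by_contra hpq
  rcases hp with hp | hp <;> rcases hq with hq | hq <;>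
    simp only [hp, hq, inner_neg_left, inner_neg_right, neg_neg, inner_eps_eps,
      if_neg hpq] at h <;> norm_num at h

theorem add_mem_rootsB {r s : Fin n} (hrs : r ≠ s) {v v' : EuclideanSpace ℝ (Fin n)}
    (hv : v = eps n r ∨ v = -eps n r) (hv' : v' = eps n s ∨ v' = -eps n s) :
    v + v' ∈ rootsB n := by
  wlog h : r < s generalizing r s v v'
  · rw [add_comm]
    exact this hrs.symm hv' hv (lt_of_le_of_ne (not_lt.1 h) hrs.symm)
  have hadd : eps n r + eps n s ∈ posB n := Or.inr ⟨r, s, h, Or.inl rfl⟩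
  have hsub : eps n r - eps n s ∈ posB n := Or.inr ⟨r, s, h, Or.inr rfl⟩
  rcases hv with rfl | rfl <;> rcases hv' with rfl | rfl
  · exact Or.inl hadd
  · exact Or.inl (by rwa [← sub_eq_add_neg])
  · exact Or.inr (by rwa [neg_add, neg_neg, ← sub_eq_add_neg])
  · exact Or.inr (by rwa [neg_add, neg_neg, neg_neg])

theorem preservesRoots_of_mem_signedPerm
    {x : EuclideanSpace ℝ (Fin n) ≃ₗᵢ[ℝ] EuclideanSpace ℝ (Fin n)} (hx : x ∈ signedPerm n) :
    PreservesRoots (posB n) x := by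
  rintro γ (⟨p, rfl⟩ | ⟨p, q, hpq, rfl | rfl⟩)
  · obtain ⟨r, hr | hr⟩ := hx p
    · exact Or.inl (Or.inl ⟨r, hr⟩)
    · exact Or.inr (Or.inl ⟨r, by rw [hr, neg_neg]⟩)
  all_goals
    obtain ⟨r, hr⟩ := hx p
    obtain ⟨s, hs⟩ := hx q
    have hrs : r ≠ s := fun h => hpq.ne (eq_of_apply_eps_eq hr (h ▸ hs))
  · rw [map_add]
    exact add_mem_rootsB hrs hr hs
  · rw [map_sub, sub_eq_add_neg]
    exact add_mem_rootsB hrs hr (hs.symm.imp (by simp [·]) (by simp [·]))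

theorem reflRoot_mem_signedPerm {α : EuclideanSpace ℝ (Fin n)} (hα : α ∈ posB n) :
    reflRoot α ∈ signedPerm n := by
  intro p
  obtain ⟨r, rfl⟩ | ⟨r, s, hrs, rfl | rfl⟩ := hα
  · rcases eq_or_ne p r with rfl | hpr
    · exact ⟨p, Or.inr (by simp only [reflRoot_apply, inner_eps_eps, if_true]; module)⟩
    · exact ⟨p, Or.inl (by simp [reflRoot_apply, inner_eps_eps, hpr.symm])⟩
  all_goals
    by_cases hp : p = r ∨ p = s
    · refine ⟨if p = r then s else r, ?_⟩
      rcases hp with rfl | rfl <;>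
        simp only [reflRoot_apply, inner_add_left, inner_add_right, inner_sub_left,
          inner_sub_right, inner_eps_eps, hrs.ne, hrs.ne', if_true, if_false] <;>
        first | exact Or.inl (by module) | exact Or.inr (by module)
    · obtain ⟨hpr, hps⟩ := not_or.1 hp
      refine ⟨p, Or.inl ?_⟩
      simp [reflRoot_apply, inner_add_left, inner_sub_left, inner_eps_eps, Ne.symm hpr,
        Ne.symm hps]

theorem eq_one_of_apply_eps {u : EuclideanSpace ℝ (Fin n) ≃ₗᵢ[ℝ] EuclideanSpace ℝ (Fin n)}
    (h : ∀ p, u (eps n p) = eps n p) : u = 1 :=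
  LinearIsometryEquiv.toLinearEquiv_injective <|
    (EuclideanSpace.basisFun (Fin n) ℝ).toBasis.ext' fun p => by simpa [eps] using h p

theorem exists_eps_sub_eq_smul_posB {a d : Fin n} (had : a ≤ d) {v : EuclideanSpace ℝ (Fin n)}
    (hv : v = eps n d ∨ v = -eps n d) (hva : v ≠ eps n a) :
    ∃ β ∈ posB n, ∃ c : ℝ, 0 < c ∧ eps n a - v = c • β := by
  rcases had.lt_or_eq with had | rfl
  · rcases hv with rfl | rfl
    · exact ⟨_, Or.inr ⟨a, d, had, Or.inr rfl⟩, 1, one_pos, (one_smul _ _).symm⟩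
    · exact ⟨_, Or.inr ⟨a, d, had, Or.inl rfl⟩, 1, one_pos, by rw [one_smul, sub_neg_eq_add]⟩
  · rcases hv with rfl | rfl
    · exact (hva rfl).elim
    · exact ⟨_, Or.inl ⟨a, rfl⟩, 2, two_pos, by module⟩

theorem coweightB_sub_apply {u : EuclideanSpace ℝ (Fin n) ≃ₗᵢ[ℝ] EuclideanSpace ℝ (Fin n)}
    {a : Fin n} (hfix : ∀ m < a, u (eps n m) = eps n m) :
    coweightB n a - u (coweightB n a) = eps n a - u (eps n a) := by
  rw [coweightB, map_sum, ← Finset.sum_sub_distrib,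
    Finset.sum_eq_single_of_mem a (Finset.mem_Iic.2 le_rfl)]
  intro m hm hma
  rw [hfix m (lt_of_le_of_ne (Finset.mem_Iic.1 hm) hma), sub_self]

theorem exists_coweightB_sub_eq_smul
    {u : EuclideanSpace ℝ (Fin n) ≃ₗᵢ[ℝ] EuclideanSpace ℝ (Fin n)} (hu : u ∈ signedPerm n)
    (hu1 : u ≠ 1) :
    ∃ a, ∃ β ∈ posB n, ∃ c : ℝ, 0 < c ∧ coweightB n a - u (coweightB n a) = c • β := by
  obtain ⟨a, ha, hmin⟩ := wellFounded_lt.has_min {p | u (eps n p) ≠ eps n p} <| by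
    by_contra h
    exact hu1 (eq_one_of_apply_eps fun p => not_not.1 fun hp => h ⟨p, hp⟩)
  have hfix : ∀ m < a, u (eps n m) = eps n m := fun m hm => not_not.1 fun h => hmin m h hm
  obtain ⟨d, hd⟩ := hu a
  have had : a ≤ d := not_lt.1 fun hda => hda.ne' (eq_of_apply_eps_eq hd (Or.inl (hfix d hda)))
  exact ⟨a, coweightB_sub_apply hfix ▸ exists_eps_sub_eq_smul_posB had hd ha⟩

end TypeB

theorem statement1_general (n : ℕ) (k : ℕ)
    (w : Fin k → (EuclideanSpace ℝ (Fin n) ≃ₗᵢ[ℝ] EuclideanSpace ℝ (Fin n)))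
    (hw : ∀ i, w i ∈ signedPerm n)
    (hcover : posB n = ⋃ i, invSet (posB n) (w i))
    (u : EuclideanSpace ℝ (Fin n) ≃ₗᵢ[ℝ] EuclideanSpace ℝ (Fin n))
    (hu : u ∈ signedPerm n)
    (hle : ∀ i, bruhatLE (rootsB n) (posB n) (w i) (w i * u)) :
    u = 1 := by
  by_contra hu1
  obtain ⟨a, β, hβ, c, hc, hβ_eq⟩ := exists_coweightB_sub_eq_smul hu hu1
  obtain ⟨i, -, hwβ⟩ := Set.mem_iUnion.1 (hcover ▸ hβ)
  obtain ⟨j, hj⟩ := exists_inner_coweightB_pos hwβ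
  have hmono := inner_apply_le_of_bruhatLE (posB_finite n) (fun _ => inner_regularB_pos)
    (fun _ hα => preservesRoots_of_mem_signedPerm (reflRoot_mem_signedPerm hα))
    (fun _ h => h) (fun _ hγ => inner_coweightB_nonneg hγ j)
    (fun _ hγ => inner_coweightB_nonneg hγ a) (preservesRoots_of_mem_signedPerm (hw i)) (hle i)
  have hwu : (w i * u) (coweightB n a) = w i (coweightB n a) - c • w i β := by
    rw [LinearIsometryEquiv.coe_mul, Function.comp_apply, ← map_smul, ← hβ_eq, map_sub,
      sub_sub_cancel]
  rw [hwu, inner_sub_right, real_inner_smul_right] at hmono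
  rw [inner_neg_left, real_inner_comm] at hj
  nlinarith

/-- In type `B_n` (`n ≥ 2`), if `Δ⁺ = Φ_{w_1} ⊔ ⋯ ⊔ Φ_{w_k}` and `u ∈ W`
satisfies `w_i ≤ w_i u` in the Bruhat order for all `i`, then `u = e`. -/
theorem statement1 (n : ℕ) (hn : 2 ≤ n) (k : ℕ)
    (w : Fin k → (EuclideanSpace ℝ (Fin n) ≃ₗᵢ[ℝ] EuclideanSpace ℝ (Fin n)))
    (hw : ∀ i, w i ∈ signedPerm n)
    (hcover : posB n = ⋃ i, invSet (posB n) (w i))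
    (hdisj : ∀ i j, i ≠ j → Disjoint (invSet (posB n) (w i)) (invSet (posB n) (w j)))
    (u : EuclideanSpace ℝ (Fin n) ≃ₗᵢ[ℝ] EuclideanSpace ℝ (Fin n))
    (hu : u ∈ signedPerm n)
    (hle : ∀ i, bruhatLE (rootsB n) (posB n) (w i) (w i * u)) :
    u = 1 :=
  statement1_general n k w hw hcover u hu hle

end
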